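/- The function F(x) = ∛(f₊(x)) + ∛(f₋(x)), where f₊(x) = √(1 − x² + x⁴/3) + (√3/9)x³ and f₋(x) = √(1 − x² + x⁴/3) − (√3/9)x³, is (weakly) decreasing on the interval [0, √(3/2)]; that is, for all 0 ≤ x ≤ y ≤ √(3/2) one has F(y) ≤ F(x). -/
import Mathlib


open Real

/-- The real (signed) cube root. -/
noncomputable def cbrt (x : ℝ) : ℝ := Real.sign x * |x| ^ ((1 : ℝ) / 3)

/-- `f₊(x) = √(1 − x² + x⁴/3) + (√3/9)x³`. -/
noncomputable def fPlus (x : ℝ) : ℝ :=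
  Real.sqrt (1 - x ^ 2 + x ^ 4 / 3) + (Real.sqrt 3 / 9) * x ^ 3

/-- `f₋(x) = √(1 − x² + x⁴/3) − (√3/9)x³`. -/
noncomputable def fMinus (x : ℝ) : ℝ :=
  Real.sqrt (1 - x ^ 2 + x ^ 4 / 3) - (Real.sqrt 3 / 9) * x ^ 3

/-- `F(x) = ∛(f₊(x)) + ∛(f₋(x))`. -/
noncomputable def Ffun (x : ℝ) : ℝ := cbrt (fPlus x) + cbrt (fMinus x)

lemma q_pos (x : ℝ) : 0 < 1 - x ^ 2 + x ^ 4 / 3 := by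
  nlinarith [sq_nonneg (x ^ 2 - 3 / 2)]

lemma sqrt_q_pos (x : ℝ) : 0 < Real.sqrt (1 - x ^ 2 + x ^ 4 / 3) :=
  Real.sqrt_pos.mpr (q_pos x)

lemma sqrt_q_sq (x : ℝ) :
    Real.sqrt (1 - x ^ 2 + x ^ 4 / 3) ^ 2 = 1 - x ^ 2 + x ^ 4 / 3 :=
  Real.sq_sqrt (q_pos x).le

lemma cbrt_pos_eq {t : ℝ} (ht : 0 < t) : cbrt t = t ^ ((1 : ℝ) / 3) := by
  rw [cbrt, Real.sign_of_pos ht, abs_of_pos ht, one_mul]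

lemma cbrt_cube {t : ℝ} (ht : 0 < t) : (cbrt t) ^ 3 = t := by
  rw [cbrt_pos_eq ht, ← Real.rpow_natCast (t ^ ((1:ℝ)/3)) 3, ← Real.rpow_mul ht.le]
  norm_num

lemma cbrt_pos {t : ℝ} (ht : 0 < t) : 0 < cbrt t := by
  rw [cbrt_pos_eq ht]
  exact Real.rpow_pos_of_pos ht _

lemma fPlus_pos {x : ℝ} (hx : 0 ≤ x) : 0 < fPlus x := by
  have h1 := sqrt_q_pos x
  have h2 : 0 ≤ (Real.sqrt 3 / 9) * x ^ 3 := by positivity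
  unfold fPlus; linarith

lemma prod_eq {x : ℝ} : fPlus x * fMinus x = (1 - x ^ 2 / 3) ^ 3 := by
  have h3 : Real.sqrt 3 ^ 2 = 3 := Real.sq_sqrt (by norm_num)
  have hq := sqrt_q_sq x
  unfold fPlus fMinus
  have hc : (Real.sqrt 3 / 9 * x ^ 3) ^ 2 = x ^ 6 / 27 := by
    rw [mul_pow, div_pow, h3]; ring
  have hexp : (Real.sqrt (1 - x ^ 2 + x ^ 4 / 3) + Real.sqrt 3 / 9 * x ^ 3) *
      (Real.sqrt (1 - x ^ 2 + x ^ 4 / 3) - Real.sqrt 3 / 9 * x ^ 3)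
      = Real.sqrt (1 - x ^ 2 + x ^ 4 / 3) ^ 2 - (Real.sqrt 3 / 9 * x ^ 3) ^ 2 := by ring
  rw [hexp, hq, hc]; ring

lemma fMinus_pos {x : ℝ} (hx : 0 ≤ x) (hx2 : x ^ 2 ≤ 3 / 2) : 0 < fMinus x := by
  have hp0 : 0 < 1 - x ^ 2 / 3 := by nlinarith
  have hp : 0 < (1 - x ^ 2 / 3) ^ 3 := by positivity
  have := prod_eq (x := x)
  have hfp := fPlus_pos hx
  nlinarith

lemma F_pos {x : ℝ} (hx : 0 ≤ x) (hx2 : x ^ 2 ≤ 3 / 2) : 0 < Ffun x := by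
  have := cbrt_pos (fPlus_pos hx)
  have := cbrt_pos (fMinus_pos hx hx2)
  unfold Ffun; linarith

lemma F_cube {x : ℝ} (hx : 0 ≤ x) (hx2 : x ^ 2 ≤ 3 / 2) :
    (Ffun x) ^ 3 = 3 * (1 - x ^ 2 / 3) * Ffun x
      + 2 * Real.sqrt (1 - x ^ 2 + x ^ 4 / 3) := by
  have hfp := fPlus_pos hx
  have hfm := fMinus_pos hx hx2
  set u := cbrt (fPlus x) with hu
  set v := cbrt (fMinus x) with hv
  have hu3 : u ^ 3 = fPlus x := cbrt_cube hfp
  have hv3 : v ^ 3 = fMinus x := cbrt_cube hfm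
  have hupos := cbrt_pos hfp
  have hvpos := cbrt_pos hfm
  have hppos : 0 < 1 - x ^ 2 / 3 := by nlinarith
  have huv : u * v = 1 - x ^ 2 / 3 := by
    have hcube : (u * v) ^ 3 = (1 - x ^ 2 / 3) ^ 3 := by
      rw [mul_pow, hu3, hv3, prod_eq]
    have hfac : (u * v - (1 - x ^ 2 / 3)) *
        ((u * v) ^ 2 + (u * v) * (1 - x ^ 2 / 3) + (1 - x ^ 2 / 3) ^ 2) = 0 := by
      linear_combination hcube
    have hpos2 : 0 < (u * v) ^ 2 + (u * v) * (1 - x ^ 2 / 3) + (1 - x ^ 2 / 3) ^ 2 := by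
      have hw := mul_pos hupos hvpos
      nlinarith [mul_pos hw hppos]
    have := mul_eq_zero.mp hfac
    rcases this with h | h
    · linarith
    · linarith
  have hsum : fPlus x + fMinus x = 2 * Real.sqrt (1 - x ^ 2 + x ^ 4 / 3) := by
    unfold fPlus fMinus; ring
  have : Ffun x = u + v := rfl
  rw [this]
  have : (u + v) ^ 3 = u ^ 3 + v ^ 3 + 3 * (u * v) * (u + v) := by ring
  rw [this, hu3, hv3, huv]
  linarith [hsum]

/-- `F` is (weakly) decreasing on `[0, √(3/2)]`. -/
theorem stmt_4 :
    ∀ x y : ℝ, 0 ≤ x → x ≤ y → y ≤ Real.sqrt (3 / 2) → Ffun y ≤ Ffun x := by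
  intro x y hx hxy hy
  have hy0 : 0 ≤ y := hx.trans hxy
  have hs : Real.sqrt (3 / 2) ^ 2 = 3 / 2 := Real.sq_sqrt (by norm_num)
  have hsnn : 0 ≤ Real.sqrt (3 / 2) := Real.sqrt_nonneg _
  have hy2 : y ^ 2 ≤ 3 / 2 := by nlinarith
  have hxy2 : x ^ 2 ≤ y ^ 2 := by nlinarith
  have hx2 : x ^ 2 ≤ 3 / 2 := le_trans hxy2 hy2
  -- monotonicity of q and hence S
  have hq : 1 - y ^ 2 + y ^ 4 / 3 ≤ 1 - x ^ 2 + x ^ 4 / 3 := by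
    nlinarith [mul_nonneg (sub_nonneg.2 hxy2) (by nlinarith : (0:ℝ) ≤ 3 - x ^ 2 - y ^ 2)]
  have hS : Real.sqrt (1 - y ^ 2 + y ^ 4 / 3) ≤ Real.sqrt (1 - x ^ 2 + x ^ 4 / 3) :=
    Real.sqrt_le_sqrt hq
  have hp : 1 - y ^ 2 / 3 ≤ 1 - x ^ 2 / 3 := by nlinarith
  set a := Ffun x with ha
  set b := Ffun y with hb
  have hA := F_cube hx hx2
  have hB := F_cube hy0 hy2
  have hapos := F_pos hx hx2
  have hbpos := F_pos hy0 hy2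
  have hSx := sqrt_q_pos x
  have hSy := sqrt_q_pos y
  -- a² > 3 p(x):  a(a² - 3p) = 2 S > 0
  have ha2 : 3 * (1 - x ^ 2 / 3) < a ^ 2 := by nlinarith
  by_contra hcon
  push_neg at hcon
  -- b³ - a³ ≤ 3 p(x) (b - a)
  have hkey : b ^ 3 - a ^ 3 ≤ 3 * (1 - x ^ 2 / 3) * (b - a) := by nlinarith
  nlinarith [mul_pos hapos hbpos, sq_nonneg b, mul_pos hbpos hbpos,
    mul_pos (sub_pos.2 hcon) (mul_pos hapos hbpos)]
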